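/- arXiv:0906.0154 — 2 statements merged into one kernel-verified Lean document; each statement's English description precedes it below -/
import Mathlib

section
/- Every connected (X,2)-arc-regular graph of even valency v ≥ 4 and girth at least 4 is a near n-gonal graph for some integer n ≥ 4. -/
open Pointwise

/-- A 2-arc `(t.1, t.2.1, t.2.2)` of a simple graph. -/
def IsArc2 {V : Type*} (G : SimpleGraph V) (t : V × V × V) : Prop :=
  G.Adj t.1 t.2.1 ∧ G.Adj t.2.1 t.2.2 ∧ t.1 ≠ t.2.2

/-- A 3-arc `(t.1, t.2.1, t.2.2.1, t.2.2.2)` of a simple graph. -/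
def IsArc3 {V : Type*} (G : SimpleGraph V) (t : V × V × V × V) : Prop :=
  G.Adj t.1 t.2.1 ∧ G.Adj t.2.1 t.2.2.1 ∧ G.Adj t.2.2.1 t.2.2.2 ∧
    t.1 ≠ t.2.2.1 ∧ t.2.1 ≠ t.2.2.2

/-- The reverse of a 3-arc. -/
def rev3 {V : Type*} (t : V × V × V × V) : V × V × V × V :=
  (t.2.2.2, t.2.2.1, t.2.1, t.1)

/-- `G` is regular of valency `d`. -/
def Regular {V : Type*} (G : SimpleGraph V) (d : ℕ) : Prop :=
  ∀ u : V, (G.neighborSet u).ncard = d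

/-- The action of `X` preserves the adjacency of `G`. -/
def AdjPres (X : Type*) {V : Type*} [Group X] [MulAction X V] (G : SimpleGraph V) : Prop :=
  ∀ (x : X) (u w : V), G.Adj u w → G.Adj (x • u) (x • w)

/-- `X` is transitive on the vertices. -/
def VertexTrans (X V : Type*) [Group X] [MulAction X V] : Prop :=
  ∀ u w : V, ∃ x : X, x • u = w

/-- `X` is transitive on the arcs of `G`. -/
def ArcTrans (X : Type*) {V : Type*} [Group X] [MulAction X V] (G : SimpleGraph V) : Prop :=
  ∀ a b : V × V, G.Adj a.1 a.2 → G.Adj b.1 b.2 → ∃ x : X, x • a = b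

/-- `G` is `X`-symmetric. -/
def XSymm (X : Type*) {V : Type*} [Group X] [MulAction X V] (G : SimpleGraph V) : Prop :=
  AdjPres X G ∧ VertexTrans X V ∧ ArcTrans X G

/-- `X` is transitive on the 2-arcs of `G`. -/
def Arc2Trans (X : Type*) {V : Type*} [Group X] [MulAction X V] (G : SimpleGraph V) : Prop :=
  ∀ s t : V × V × V, IsArc2 G s → IsArc2 G t → ∃ x : X, x • s = t

/-- `X` is transitive on the 3-arcs of `G`. -/
def Arc3Trans (X : Type*) {V : Type*} [Group X] [MulAction X V] (G : SimpleGraph V) : Prop :=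
  ∀ s t : V × V × V × V, IsArc3 G s → IsArc3 G t → ∃ x : X, x • s = t

/-- `G` is `(X,2)`-arc-transitive. -/
def Arc2TransGraph (X : Type*) {V : Type*} [Group X] [MulAction X V] (G : SimpleGraph V) : Prop :=
  XSymm X G ∧ Arc2Trans X G

/-- `X` is regular on the 2-arcs of `G`, i.e. `G` is `(X,2)`-arc-regular
(together with `X`-symmetry). -/
def Arc2Reg (X : Type*) {V : Type*} [Group X] [MulAction X V] (G : SimpleGraph V) : Prop :=
  XSymm X G ∧ ∀ s t : V × V × V, IsArc2 G s → IsArc2 G t → ∃! x : X, x • s = t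

/-- `Δ` is a self-paired `X`-orbit on the set of 3-arcs of `G`. -/
def SelfPairedOrbit3 (X : Type*) {V : Type*} [Group X] [MulAction X V] (G : SimpleGraph V)
    (Δ : Set (V × V × V × V)) : Prop :=
  (∀ t ∈ Δ, IsArc3 G t) ∧ (∃ t₀ ∈ Δ, Δ = MulAction.orbit X t₀) ∧ ∀ t ∈ Δ, rev3 t ∈ Δ

/-- `ℓ₁(Δ) = k`:  for each `(τ₁,τ,σ,σ₁) ∈ Δ`, the orbit of `σ₁` under the pointwise
stabilizer of `(τ₁,τ,σ)` in `X` has exactly `k` elements. -/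
def Ell1Eq (X : Type*) {V : Type*} [Group X] [MulAction X V]
    (Δ : Set (V × V × V × V)) (k : ℕ) : Prop :=
  ∀ t ∈ Δ, ({u : V | ∃ x : X, x • t.1 = t.1 ∧ x • t.2.1 = t.2.1 ∧
    x • t.2.2.1 = t.2.2.1 ∧ x • t.2.2.2 = u}).ncard = k

/-- The arc set of the cycle traced by `c : ZMod n → V`. -/
def cycleArcSet {V : Type*} (n : ℕ) (c : ZMod n → V) : Set (V × V) :=
  {p | ∃ i : ZMod n, p = (c i, c (i + 1)) ∨ p = (c (i + 1), c i)}

/-- `S` is (the arc set of) an `n`-cycle of `G`. -/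
def IsNCycleSet {V : Type*} (G : SimpleGraph V) (n : ℕ) (S : Set (V × V)) : Prop :=
  ∃ c : ZMod n → V, Function.Injective c ∧ (∀ i, G.Adj (c i) (c (i + 1))) ∧ S = cycleArcSet n c

/-- The vertex set of a cycle given by its arc set. -/
def cycVerts {V : Type*} (S : Set (V × V)) : Set V := {u | ∃ w, (u, w) ∈ S}

/-- The 3-arcs of a cycle given by its arc set. -/
def cycArc3 {V : Type*} (S : Set (V × V)) : Set (V × V × V × V) :=
  {t | (t.1, t.2.1) ∈ S ∧ (t.2.1, t.2.2.1) ∈ S ∧ (t.2.2.1, t.2.2.2) ∈ S ∧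
    t.1 ≠ t.2.2.1 ∧ t.2.1 ≠ t.2.2.2}

/-- The disjoint union `mC_n` of `m` cycles of length `n`. -/
def mCycles (m n : ℕ) : SimpleGraph (Fin m × ZMod n) :=
  SimpleGraph.fromRel (fun p q => p.1 = q.1 ∧ q.2 = p.2 + 1)

/-- `E` is an `X`-orbit (on sets of arcs, e.g. on `n`-cycles). -/
def XOrbitOfArcSets (X : Type*) {V : Type*} [Group X] [MulAction X V]
    (E : Set (Set (V × V))) : Prop :=
  ∃ S₀ ∈ E, E = MulAction.orbit X S₀

/-- The permutation group induced on the vertex set of a cycle (with arc set `S`) by the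
setwise stabilizer in `X` of the cycle. -/
def inducedCyclePerms (X : Type*) {V : Type*} [Group X] [MulAction X V] (S : Set (V × V)) :
    Subgroup (Equiv.Perm ↥(cycVerts S)) where
  carrier := {e | ∃ x : X, x • S = S ∧ ∀ u : ↥(cycVerts S), (e u : V) = x • (u : V)}
  one_mem' := ⟨1, one_smul _ _, fun u => by simp⟩
  mul_mem' := by
    rintro e f ⟨x, hxS, hx⟩ ⟨y, hyS, hy⟩
    refine ⟨x * y, by rw [mul_smul, hyS, hxS], fun u => ?_⟩
    rw [Equiv.Perm.mul_apply, hx, hy, mul_smul]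
  inv_mem' := by
    rintro e ⟨x, hxS, hx⟩
    refine ⟨x⁻¹, inv_smul_eq_iff.mpr hxS.symm, fun u => ?_⟩
    have h := hx (e⁻¹ u)
    rw [show e (e⁻¹ u) = u from e.apply_symm_apply u] at h
    rw [eq_inv_smul_iff]
    exact h.symm

/-- `G` is a near `n`-gonal graph with respect to the set `E` of `n`-cycles. -/
def NearNGonal {V : Type*} (G : SimpleGraph V) (n : ℕ) (E : Set (Set (V × V))) : Prop :=
  G.Connected ∧ 4 ≤ G.girth ∧ (∀ S ∈ E, IsNCycleSet G n S) ∧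
    ∀ t : V × V × V, IsArc2 G t →
      ∃! S : Set (V × V), S ∈ E ∧ (t.1, t.2.1) ∈ S ∧ (t.2.1, t.2.2) ∈ S

/-!
Fix a 2-arc `(p, q, r)`. The elements of `X` swapping `q` and `r` correspond, via `g ↦ g • p`,
to the `v - 1` neighbours of `r` other than `q`; as `v - 1` is odd, inversion fixes one of them,
an involution `y`. If `x` shunts `(p, q, r)` to `(q, r, y • p)`, then 2-arc regularity gives
`y x y⁻¹ = x⁻¹`, so the orbit of `p` under `⟨x⟩` is a cycle whose setwise stabiliser contains
all rotations `x ^ k` and the reflection `y`, hence is transitive on the 2-arcs of the cycle.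
Regularity then makes every 2-arc of `G` lie in exactly one `X`-image of this cycle, and the
girth bound rules out triangles, so the cycle has length at least 4.
-/

open MulAction Function

theorem SimpleGraph.cliqueFree_three_of_four_le_girth {V : Type*} {G : SimpleGraph V}
    (h : 4 ≤ G.girth) : G.CliqueFree 3 := by
  by_contra hG
  rw [not_cliqueFree_iff_top_isContained] at hG
  have h3 : (completeGraph (Fin 3)).girth = 3 := girth_top (by simp)
  have := hG.girth_le (by rw [← girth_eq_zero, h3]; omega)
  omega

theorem Function.Involutive.exists_fixed_of_odd_card {α : Type*} [Finite α] {f : α → α}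
    (hf : Involutive f) (hodd : Odd (Nat.card α)) : ∃ a, f a = a := by
  have := Fintype.ofFinite α
  rw [Nat.card_eq_fintype_card] at hodd
  exact Equiv.Perm.exists_fixed_point_of_prime (p := 2) (n := 1) (σ := hf.toPerm)
    hodd.not_two_dvd_nat (Equiv.ext fun a => hf a)

section

variable {V X : Type*} [Group X] [MulAction X V] {G : SimpleGraph V}

theorem AdjPres.isArc2_smul (hG : AdjPres X G) (g : X) {t : V × V × V} (ht : IsArc2 G t) :
    IsArc2 G (g • t) :=
  ⟨hG g _ _ ht.1, hG g _ _ ht.2.1, (MulAction.injective g).ne ht.2.2⟩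

namespace Arc2Reg

theorem exists_smul_eq (h : Arc2Reg X G) {s t : V × V × V} (hs : IsArc2 G s)
    (ht : IsArc2 G t) : ∃ g : X, g • s = t :=
  (h.2 s t hs ht).exists

theorem eq_of_smul_eq (h : Arc2Reg X G) {t : V × V × V} (ht : IsArc2 G t) {g k : X}
    (hgk : g • t = k • t) : g = k :=
  (h.2 t (k • t) ht (h.1.1.isArc2_smul k ht)).unique hgk rfl

theorem natCard_swap_eq (h : Arc2Reg X G) {p q r : V} (hpqr : IsArc2 G (p, q, r)) :
    Nat.card {g : X // g • q = r ∧ g • r = q} = (G.neighborSet r \ {q}).ncard := by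
  rw [← Nat.card_coe_set_eq]
  refine Nat.card_congr (Equiv.ofBijective
    (fun g => ⟨g.1 • p, ?_, ?_⟩) ⟨fun g k hgk => ?_, fun d => ?_⟩)
  · simpa [g.2.1] using h.1.1 g.1 _ _ hpqr.1.symm
  · simpa [← g.2.2] using (MulAction.injective g.1).ne hpqr.2.2
  · refine Subtype.ext (h.eq_of_smul_eq hpqr ?_)
    simpa [g.2.1, g.2.2, k.2.1, k.2.2] using congrArg Subtype.val hgk
  · obtain ⟨d, hrd, hdq⟩ := d
    obtain ⟨g, hg⟩ := h.exists_smul_eq hpqr (t := (d, r, q)) ⟨hrd.symm, hpqr.2.1.symm, hdq⟩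
    simp only [Prod.smul_mk, Prod.mk.injEq] at hg
    exact ⟨⟨g, hg.2.1, hg.2.2⟩, Subtype.ext hg.1⟩

theorem exists_involution_swap (h : Arc2Reg X G) {p q r : V} (hpqr : IsArc2 G (p, q, r))
    (hodd : Odd (G.neighborSet r \ {q}).ncard) :
    ∃ y : X, y • q = r ∧ y • r = q ∧ y⁻¹ = y := by
  rw [← h.natCard_swap_eq hpqr] at hodd
  have : Finite {g : X // g • q = r ∧ g • r = q} := Nat.finite_of_card_ne_zero hodd.pos.ne'
  have hinv : Involutive fun g : {g : X // g • q = r ∧ g • r = q} =>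
      (⟨g.1⁻¹, inv_smul_eq_iff.2 g.2.2.symm, inv_smul_eq_iff.2 g.2.1.symm⟩ :
        {g : X // g • q = r ∧ g • r = q}) :=
    fun g => Subtype.ext (inv_inv g.1)
  obtain ⟨⟨y, hyq, hyr⟩, hy⟩ := hinv.exists_fixed_of_odd_card hodd
  exact ⟨y, hyq, hyr, congrArg Subtype.val hy⟩

theorem exists_shift_and_reflection (h : Arc2Reg X G) {p q r : V} (hpqr : IsArc2 G (p, q, r))
    (hodd : Odd (G.neighborSet r \ {q}).ncard) :
    ∃ x y : X, x • p = q ∧ x • q = r ∧ y * x * y⁻¹ = x⁻¹ ∧ y • p = x ^ (3 : ℤ) • p := by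
  obtain ⟨y, hyq, hyr, hyinv⟩ := h.exists_involution_swap hpqr hodd
  have hqrd : IsArc2 G (q, r, y • p) := by
    simpa [hyq, hyr] using h.1.1.isArc2_smul y (t := (r, q, p))
      ⟨hpqr.2.1.symm, hpqr.1.symm, hpqr.2.2.symm⟩
  obtain ⟨x, hx⟩ := h.exists_smul_eq hpqr hqrd
  simp only [Prod.smul_mk, Prod.mk.injEq] at hx
  obtain ⟨hxp, hxq, hxr⟩ := hx
  refine ⟨x, y, hxp, hxq, h.eq_of_smul_eq hqrd ?_, ?_⟩
  · have hyy : y • y • p = p := by nth_rw 1 [← hyinv]; exact inv_smul_smul y p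
    simp [hyinv, mul_smul, hyq, hyr, hyy, eq_inv_smul_iff, hxp, hxq, hxr]
  · rw [zpow_ofNat, pow_succ, mul_smul, hxp, sq, mul_smul, hxq, hxr]

theorem existsUnique_mem_orbit (h : Arc2Reg X G) {S : Set (V × V)} {t₀ : V × V × V}
    (ht₀ : IsArc2 G t₀) (ht₀S : (t₀.1, t₀.2.1) ∈ S ∧ (t₀.2.1, t₀.2.2) ∈ S)
    (hS : ∀ t : V × V × V, IsArc2 G t → (t.1, t.2.1) ∈ S → (t.2.1, t.2.2) ∈ S →
      ∃ g : X, g • S = S ∧ g • t₀ = t)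
    {t : V × V × V} (ht : IsArc2 G t) :
    ∃! S' : Set (V × V), S' ∈ orbit X S ∧ (t.1, t.2.1) ∈ S' ∧ (t.2.1, t.2.2) ∈ S' := by
  obtain ⟨g, rfl⟩ := h.exists_smul_eq ht₀ ht
  refine ⟨g • S, ⟨mem_orbit S g, Set.smul_mem_smul_set ht₀S.1, Set.smul_mem_smul_set ht₀S.2⟩, ?_⟩
  rintro _ ⟨⟨k, rfl⟩, h₁, h₂⟩
  rw [Set.mem_smul_set_iff_inv_smul_mem] at h₁ h₂
  obtain ⟨s, hsS, hst⟩ := hS (k⁻¹ • g • t₀) (h.1.1.isArc2_smul _ ht) h₁ h₂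
  have hks : k * s = g := h.eq_of_smul_eq ht₀ (by rw [mul_smul, hst, smul_inv_smul])
  change k • S = g • S
  rw [← hks, mul_smul, hsS]

end Arc2Reg

section CycleArcSet

variable {n : ℕ}

theorem smul_cycleArcSet (g : X) (γ : ZMod n → V) :
    g • cycleArcSet n γ = cycleArcSet n (fun i => g • γ i) := by
  ext ⟨a, b⟩
  simp only [Set.mem_smul_set_iff_inv_smul_mem, cycleArcSet, Set.mem_ofPred_eq, Prod.smul_mk,
    Prod.mk.injEq, inv_smul_eq_iff]

theorem cycleArcSet_comp_add (γ : ZMod n → V) (c : ZMod n) :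
    cycleArcSet n (fun i => γ (i + c)) = cycleArcSet n γ := by
  ext a
  constructor
  · rintro ⟨i, h⟩
    exact ⟨i + c, by rwa [add_right_comm]⟩
  · rintro ⟨i, h⟩
    have e : i - c + 1 + c = i + 1 := by ring
    exact ⟨i - c, by simpa only [sub_add_cancel, e] using h⟩

theorem cycleArcSet_comp_sub (γ : ZMod n → V) (c : ZMod n) :
    cycleArcSet n (fun i => γ (c - i)) = cycleArcSet n γ := by
  ext a
  constructor
  · rintro ⟨i, h⟩
    have e : c - (i + 1) + 1 = c - i := by ring
    exact ⟨c - (i + 1), by simpa only [e, or_comm] using h⟩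
  · rintro ⟨i, h⟩
    have e : c - (c - (i + 1) + 1) = i := by ring
    exact ⟨c - (i + 1), by simpa only [e, sub_sub_cancel, or_comm] using h⟩

theorem exists_eq_of_mem_cycleArcSet {γ : ZMod n → V} (hγ : Injective γ) {a b c : V}
    (hab : (a, b) ∈ cycleArcSet n γ) (hbc : (b, c) ∈ cycleArcSet n γ) (hac : a ≠ c) :
    ∃ i, (a, b, c) = (γ i, γ (i + 1), γ (i + 2)) ∨ (a, b, c) = (γ (i + 2), γ (i + 1), γ i) := by
  have two : ∀ i : ZMod n, i + 1 + 1 = i + 2 := fun i => by ring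
  obtain ⟨i, hi | hi⟩ := hab <;> obtain ⟨j, hj | hj⟩ := hbc <;>
    simp only [Prod.mk.injEq] at hi hj <;> obtain ⟨rfl, rfl⟩ := hi <;> obtain ⟨hj, rfl⟩ := hj
  · obtain rfl := hγ hj
    exact ⟨i, .inl (by rw [two])⟩
  · exact (hac (by rw [add_right_cancel (hγ hj)])).elim
  · exact (hac (by rw [hγ hj])).elim
  · obtain rfl := hγ hj
    exact ⟨j, .inr (by rw [two])⟩

theorem exists_smul_eq_of_mem_cycleArcSet {γ : ZMod n → V} (hγ : Injective γ)
    (hshift : ∀ k, ∃ g : X, ∀ i, g • γ i = γ (i + k))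
    (hrefl : ∃ (g : X) (c : ZMod n), ∀ i, g • γ i = γ (c - i)) {a b c : V}
    (hab : (a, b) ∈ cycleArcSet n γ) (hbc : (b, c) ∈ cycleArcSet n γ) (hac : a ≠ c) :
    ∃ g : X, g • cycleArcSet n γ = cycleArcSet n γ ∧ g • (γ 0, γ 1, γ 2) = (a, b, c) := by
  obtain ⟨i, hi | hi⟩ := exists_eq_of_mem_cycleArcSet hγ hab hbc hac
  · obtain ⟨g, hg⟩ := hshift i
    refine ⟨g, ?_, ?_⟩
    · rw [smul_cycleArcSet, funext hg, cycleArcSet_comp_add]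
    · simp [hi, hg, add_comm]
  · obtain ⟨s, c, hs⟩ := hrefl
    obtain ⟨g, hg⟩ := hshift (i + 2 - c)
    have hgs : ∀ j, (g * s) • γ j = γ (i + 2 - j) := fun j => by
      rw [mul_smul, hs, hg]; ring_nf
    refine ⟨g * s, ?_, ?_⟩
    · rw [smul_cycleArcSet, funext hgs, cycleArcSet_comp_sub]
    · simp only [hi, Prod.smul_mk, hgs]
      ring_nf

theorem four_le_of_cliqueFree_three [NeZero n] (hG : G.CliqueFree 3)
    {γ : ZMod n → V} (hadj : ∀ i, G.Adj (γ i) (γ (i + 1))) (h02 : γ 0 ≠ γ 2) : 4 ≤ n := by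
  by_contra! hn
  have := NeZero.pos n
  interval_cases n
  · exact (hadj 0).ne (congrArg γ (Subsingleton.elim _ _))
  · exact h02 rfl
  · classical
    have h20 := hadj 2
    rw [show (2 + 1 : ZMod 3) = 0 from rfl] at h20
    exact hG {γ 0, γ 1, γ 2} (SimpleGraph.is3Clique_triple_iff.2 ⟨hadj 0, h20.symm, hadj 1⟩)

theorem IsNCycleSet.smul (hG : AdjPres X G) {S : Set (V × V)}
    (hS : IsNCycleSet G n S) (g : X) : IsNCycleSet G n (g • S) := by
  obtain ⟨γ, hγ, hadj, rfl⟩ := hS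
  exact ⟨fun i => g • γ i, (MulAction.injective g).comp hγ, fun i => hG g _ _ (hadj i),
    smul_cycleArcSet g γ⟩

end CycleArcSet

/-- `k ↦ x ^ k • p`, indexed by `ZMod` of the period of `p` under `x`. -/
noncomputable def zpowersCycle (x : X) (p : V) : ZMod (minimalPeriod (x • ·) p) → V :=
  fun k => ((orbitZPowersEquiv x p).symm k : V)

namespace zpowersCycle

variable (x : X) (p : V)

theorem intCast (k : ℤ) : zpowersCycle x p k = x ^ k • p := by
  simp [zpowersCycle, orbitZPowersEquiv_symm_apply', Subgroup.smul_def]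

theorem injective : Injective (zpowersCycle x p) :=
  Subtype.val_injective.comp (orbitZPowersEquiv x p).symm.injective

theorem zpow_smul (k : ℤ) (i : ZMod (minimalPeriod (x • ·) p)) :
    x ^ k • zpowersCycle x p i = zpowersCycle x p (i + k) := by
  obtain ⟨i, rfl⟩ := ZMod.intCast_surjective i
  rw [intCast, smul_smul, ← zpow_add, ← Int.cast_add, intCast, add_comm]

theorem smul_of_conj_eq_inv {y : X} (hy : y * x * y⁻¹ = x⁻¹) {m : ℤ} (hyp : y • p = x ^ m • p)
    (i : ZMod (minimalPeriod (x • ·) p)) : y • zpowersCycle x p i = zpowersCycle x p (m - i) := by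
  obtain ⟨i, rfl⟩ := ZMod.intCast_surjective i
  have hconj : y * x ^ i * y⁻¹ = x ^ (-i) := by rw [← conj_zpow, hy, inv_zpow']
  calc y • zpowersCycle x p i = (y * x ^ i * y⁻¹) • y • p := by simp [intCast, mul_smul]
    _ = zpowersCycle x p (m - i) := by
      rw [hconj, hyp, smul_smul, ← zpow_add, neg_add_eq_sub, ← intCast, Int.cast_sub]

theorem adj (hG : AdjPres X G) (hp : G.Adj p (x • p)) (i : ZMod (minimalPeriod (x • ·) p)) :
    G.Adj (zpowersCycle x p i) (zpowersCycle x p (i + 1)) := by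
  obtain ⟨i, rfl⟩ := ZMod.intCast_surjective i
  rw [← Int.cast_one, ← Int.cast_add, intCast, intCast, zpow_add_one, mul_smul]
  exact hG _ _ _ hp

end zpowersCycle

theorem SimpleGraph.exists_isArc2_of_regular [Nonempty V] {v : ℕ} (hv : 2 ≤ v)
    (hreg : Regular G v) : ∃ p q r : V, IsArc2 G (p, q, r) := by
  obtain ⟨p⟩ := ‹Nonempty V›
  obtain ⟨q, hpq⟩ := Set.nonempty_of_ncard_ne_zero (s := G.neighborSet p) (by rw [hreg p]; omega)
  obtain ⟨r, hqr, hrp⟩ :=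
    Set.exists_ne_of_one_lt_ncard (s := G.neighborSet q) (by rw [hreg q]; omega) p
  exact ⟨p, q, r, hpq, hqr, hrp.symm⟩

end

/-- Every connected `(X,2)`-arc-regular graph of even valency `v ≥ 4` and
girth at least `4` is a near `n`-gonal graph for some `n ≥ 4`. -/
theorem nearNGonal_of_arc2Regular {V X : Type*} [Fintype V] [Group X] [MulAction X V]
    (G : SimpleGraph V) (v : ℕ) (hv : 4 ≤ v) (hveven : Even v) (hreg : Regular G v)
    (hconn : G.Connected) (h2ar : Arc2Reg X G) (hgirth : 4 ≤ G.girth) :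
    ∃ (n : ℕ) (E : Set (Set (V × V))), 4 ≤ n ∧ NearNGonal G n E := by
  have := hconn.nonempty
  obtain ⟨p, q, r, hpqr⟩ := G.exists_isArc2_of_regular (by omega) hreg
  have hodd : Odd (G.neighborSet r \ {q}).ncard := by
    rw [Set.ncard_sdiff_singleton_of_mem (show q ∈ G.neighborSet r from hpqr.2.1.symm), hreg r]
    exact Nat.Even.sub_odd (by omega) hveven odd_one
  obtain ⟨x, y, hxp, hxq, hconj, hyp⟩ := h2ar.exists_shift_and_reflection hpqr hodd
  set γ := zpowersCycle x p
  have hγ₀ : γ 0 = p := by simpa using zpowersCycle.intCast x p 0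
  have hγ₁ : γ 1 = q := by simpa [hxp] using zpowersCycle.intCast x p 1
  have hγ₂ : γ 2 = r := by simpa [sq, mul_smul, hxp, hxq] using zpowersCycle.intCast x p 2
  have hadj := zpowersCycle.adj x p h2ar.1.1 (hxp ▸ hpqr.1)
  have harc : IsArc2 G (γ 0, γ 1, γ 2) := by rwa [hγ₀, hγ₁, hγ₂]
  refine ⟨_, orbit X (cycleArcSet _ γ),
    four_le_of_cliqueFree_three (G.cliqueFree_three_of_four_le_girth hgirth) hadj harc.2.2,
    hconn, hgirth, ?_, fun t ht => ?_⟩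
  · rintro _ ⟨g, rfl⟩
    exact IsNCycleSet.smul h2ar.1.1 ⟨γ, zpowersCycle.injective x p, hadj, rfl⟩ g
  refine h2ar.existsUnique_mem_orbit (S := cycleArcSet _ γ) harc ⟨⟨0, .inl (by rw [zero_add])⟩,
    ⟨1, .inl (by rw [one_add_one_eq_two])⟩⟩ (fun t ht h₁ h₂ => ?_) ht
  refine exists_smul_eq_of_mem_cycleArcSet (zpowersCycle.injective x p) (fun k => ?_)
    ⟨y, _, zpowersCycle.smul_of_conj_eq_inv x p hconj hyp⟩ h₁ h₂ ht.2.2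
  obtain ⟨k, rfl⟩ := ZMod.intCast_surjective k
  exact ⟨x ^ k, zpowersCycle.zpow_smul x p k⟩
end

section
/- Let Γ be a finite X-symmetric graph with a nontrivial X-invariant partition B of V(Γ) such that the quotient Γ_B has valency b ≥ 3, Γ is not a multicover of Γ_B, and r = 2. Fix B₀ ∈ B and suppose that Γ(D) ∩ B₀ ∩ Γ(C) ≠ ∅ for every 2-path [D,B₀,C] of Γ_B with middle vertex B₀. Then: Γ_B is (X,2)-arc-transitive; λ := |Γ(D) ∩ B ∩ Γ(C)| is independent of the choice of 2-path [D,B,C] of Γ_B; the set Δ of all 3-arcs (C, B(v), B(u), D) of Γ_B — where (v,u) ∈ Arc(Γ), B(v) and B(u) are the blocks of B containing v and u respectively, C ∈ Γ_B(v) with C ≠ B(u), and D ∈ Γ_B(u) with D ≠ B(v) — is a self-paired X-orbit on Arc₃(Γ_B); and either (a) λ = 1 and Γ ≅ ℷ(Γ_B,Δ), or (b) λ ≥ 2 and Q := {Γ(D) ∩ B ∩ Γ(C) : [D,B,C] a 2-path of Γ_B} is a second nontrivial X-invariant partition of V(Γ) which properly refines B and satisfies Γ_Q ≅ ℷ(Γ_B,Δ).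 -/
open Pointwise

/-- A 2-path of `G`, as an ordered triple with distinct vertices. -/
def Path2 {V : Type*} (G : SimpleGraph V) : Type _ :=
  {p : V × V × V // G.Adj p.1 p.2.1 ∧ G.Adj p.2.1 p.2.2 ∧ p.1 ≠ p.2.2}

/-- The reverse of a 2-path. -/
def p2rev {V : Type*} (G : SimpleGraph V) (p : Path2 G) : Path2 G :=
  ⟨(p.1.2.2, p.1.2.1, p.1.1), p.2.2.1.symm, p.2.1.symm, p.2.2.2.symm⟩

/-- 2-paths of `G` up to reversal. -/
def P2 {V : Type*} (G : SimpleGraph V) : Type _ :=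
  Quot (fun p q : Path2 G => q = p2rev G p)

/-- The 2-path (mod reversal) determined by an ordered 2-path. -/
def P2.mk {V : Type*} (G : SimpleGraph V) (p : Path2 G) : P2 G := Quot.mk _ p

/-- The graph `ℷ(G,Δ)` on the 2-paths of `G`:  `[α₀,α₁,α₂]` is adjacent to
`[α₁,α₂,α₃]` whenever `(α₀,α₁,α₂,α₃) ∈ Δ`. -/
def gimel {V : Type*} (G : SimpleGraph V) (Δ : Set (V × V × V × V)) : SimpleGraph (P2 G) :=
  SimpleGraph.fromRel (fun z w => ∃ p q : Path2 G,
    z = P2.mk G p ∧ w = P2.mk G q ∧ p.1.2.1 = q.1.1 ∧ p.1.2.2 = q.1.2.1 ∧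
    (p.1.1, p.1.2.1, p.1.2.2, q.1.2.2) ∈ Δ)

/-- The block `P_τ` of all 2-paths of `G` with middle vertex `τ`. -/
def PBlock {V : Type*} (G : SimpleGraph V) (τ : V) : Set (P2 G) :=
  {z | ∃ p : Path2 G, z = P2.mk G p ∧ p.1.2.1 = τ}

/-- `x ∈ X` maps the 2-path `z` to the 2-path `w` (under the induced action of `X`
on 2-paths mod reversal). -/
def P2Maps (X : Type*) {V : Type*} [Group X] [MulAction X V] (G : SimpleGraph V)
    (x : X) (z w : P2 G) : Prop :=
  ∃ p q : Path2 G, z = P2.mk G p ∧ w = P2.mk G q ∧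
    (q.1 = x • p.1 ∨ q.1 = x • (p2rev G p).1)

/-- For a graph `H` whose vertices carry an induced `X`-action described by a relation
`M x z w` (“`x` maps `z` to `w`”), `H` is `X`-symmetric:  `X` preserves adjacency and is
transitive on vertices and on arcs. -/
def RelXSymm (X : Type*) {W : Type*} [Group X] (M : X → W → W → Prop)
    (H : SimpleGraph W) : Prop :=
  (∀ (x : X) (z w z' w' : W), H.Adj z w → M x z z' → M x w w' → H.Adj z' w') ∧
  (∀ z w : W, ∃ x : X, M x z w) ∧
  (∀ z₁ z₂ w₁ w₂ : W, H.Adj z₁ z₂ → H.Adj w₁ w₂ → ∃ x : X, M x z₁ w₁ ∧ M x z₂ w₂)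

/-- `X` is transitive on the 2-arcs of `H`, the action being described by `M`. -/
def RelArc2Trans (X : Type*) {W : Type*} [Group X] (M : X → W → W → Prop)
    (H : SimpleGraph W) : Prop :=
  ∀ z₁ z₂ z₃ w₁ w₂ w₃ : W, H.Adj z₁ z₂ → H.Adj z₂ z₃ → z₁ ≠ z₃ →
    H.Adj w₁ w₂ → H.Adj w₂ w₃ → w₁ ≠ w₃ →
    ∃ x : X, M x z₁ w₁ ∧ M x z₂ w₂ ∧ M x z₃ w₃

/-- `X` is regular on the arcs of `H`, the action being described by `M`. -/
def RelArc1Reg (X : Type*) {W : Type*} [Group X] (M : X → W → W → Prop)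
    (H : SimpleGraph W) : Prop :=
  ∀ z₁ z₂ w₁ w₂ : W, H.Adj z₁ z₂ → H.Adj w₁ w₂ →
    ∃! x : X, M x z₁ w₁ ∧ M x z₂ w₂

/-- `X` is regular on the 2-arcs of `H`, the action being described by `M`. -/
def RelArc2Reg (X : Type*) {W : Type*} [Group X] (M : X → W → W → Prop)
    (H : SimpleGraph W) : Prop :=
  ∀ z₁ z₂ z₃ w₁ w₂ w₃ : W, H.Adj z₁ z₂ → H.Adj z₂ z₃ → z₁ ≠ z₃ →
    H.Adj w₁ w₂ → H.Adj w₂ w₃ → w₁ ≠ w₃ →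
    ∃! x : X, M x z₁ w₁ ∧ M x z₂ w₂ ∧ M x z₃ w₃

/-- The neighbourhood `Γ(B) = ⋃_{u ∈ B} Γ(u)` of a set of vertices. -/
def nbhd {V : Type*} (Γ : SimpleGraph V) (B : Set V) : Set V :=
  ⋃ u ∈ B, Γ.neighborSet u

/-- Two sets of vertices are adjacent if they are distinct and joined by an edge. -/
def QAdj {V : Type*} (Γ : SimpleGraph V) (B C : Set V) : Prop :=
  B ≠ C ∧ ∃ u ∈ B, ∃ w ∈ C, Γ.Adj u w

/-- The quotient graph of `Γ` with respect to a partition `P` of its vertex set. -/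
def quotGraph {V : Type*} (Γ : SimpleGraph V) (P : Set (Set V)) : SimpleGraph ↥P :=
  SimpleGraph.fromRel (fun B C => ∃ u ∈ (B : Set V), ∃ w ∈ (C : Set V), Γ.Adj u w)

/-- `P` is an `X`-invariant partition of the vertex set. -/
def XInvariantPartition (X : Type*) {V : Type*} [Group X] [MulAction X V]
    (P : Set (Set V)) : Prop :=
  Setoid.IsPartition P ∧ ∀ (x : X), ∀ B ∈ P, x • B ∈ P

/-- The partition `P` is nontrivial: `1 < |B| < |V|` for each block `B`. -/
def NontrivialBlocks {V : Type*} [Fintype V] (P : Set (Set V)) : Prop :=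
  ∀ B ∈ P, 1 < B.ncard ∧ B.ncard < Fintype.card V

/-- `x ∈ X` maps the block `B` to the block `C`. -/
def BlockMaps (X : Type*) {V : Type*} [Group X] [MulAction X V] (P : Set (Set V))
    (x : X) (B C : ↥P) : Prop :=
  (C : Set V) = x • (B : Set V)

/-- The set `Δ` of 3-arcs `(C, B(v), B(u), D)` of the quotient graph, where `(v,u)` is an
arc of `Γ`, `C ∈ Γ_B(v) ∖ {B(u)}` and `D ∈ Γ_B(u) ∖ {B(v)}`. -/
def quotDelta {V : Type*} (Γ : SimpleGraph V) (P : Set (Set V)) :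
    Set (↥P × ↥P × ↥P × ↥P) :=
  {t | ∃ u w : V, Γ.Adj u w ∧ u ∈ (t.2.1 : Set V) ∧ w ∈ (t.2.2.1 : Set V) ∧
    u ∈ nbhd Γ ↑t.1 ∧ w ∈ nbhd Γ ↑t.2.2.2 ∧ t.1 ≠ t.2.2.1 ∧ t.2.2.2 ≠ t.2.1}

/-- `Δ` is a self-paired `X`-orbit on the 3-arcs of the quotient graph. -/
def QSelfPairedOrbit3 (X : Type*) {V : Type*} [Group X] [MulAction X V]
    (Γ : SimpleGraph V) (P : Set (Set V)) (Δ : Set (↥P × ↥P × ↥P × ↥P)) : Prop :=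
  (∀ t ∈ Δ, IsArc3 (quotGraph Γ P) t) ∧
  (∃ t₀ ∈ Δ, ∀ t, t ∈ Δ ↔ ∃ x : X, BlockMaps X P x t₀.1 t.1 ∧
    BlockMaps X P x t₀.2.1 t.2.1 ∧ BlockMaps X P x t₀.2.2.1 t.2.2.1 ∧
    BlockMaps X P x t₀.2.2.2 t.2.2.2) ∧
  (∀ t ∈ Δ, rev3 t ∈ Δ)

/-- The refinement `Q = {Γ(D) ∩ B ∩ Γ(C)}` of the partition `P`, indexed by the 2-paths
`[D,B,C]` of the quotient graph. -/
def quotRefine {V : Type*} (Γ : SimpleGraph V) (P : Set (Set V)) : Set (Set V) :=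
  {S | ∃ D B C : ↥P, (quotGraph Γ P).Adj D B ∧ (quotGraph Γ P).Adj B C ∧ D ≠ C ∧
    S = nbhd Γ ↑D ∩ ↑B ∩ nbhd Γ ↑C}

/-!
Since `r = 2`, a vertex `v` of `Γ` has neighbours in exactly two blocks `D, C`, both different
from its own block `B(v)`; so `v` lies in the set `Γ(D) ∩ B(v) ∩ Γ(C)` (its *trace*) of exactly
one 2-path `[D, B(v), C]` of `Γ_B`, and the traces partition `V(Γ)`, indexed by the 2-paths up to
reversal. The hypothesis at `B₀`, transported by vertex-transitivity, makes every trace nonempty.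
An arc `(u, c)` of `Γ` with `u` in the trace of `[D, B, C]` and `c ∈ C` determines that 2-path
(`D` is the other block seen from `u`), so arc-transitivity of `Γ` yields 2-arc-transitivity of
`Γ_B`, a common trace size `λ`, and transitivity on `Δ`. Finally two traces are joined by an edge
of `Γ` exactly when their 2-paths are adjacent in `ℷ(Γ_B, Δ)`: collapsing every trace to a point
is an isomorphism onto `ℷ(Γ_B, Δ)`, of `Γ` itself if `λ = 1` and of `Γ_Q` if `λ ≥ 2`.
-/

section Basic

variable {V : Type*} {Γ : SimpleGraph V} {P : Set (Set V)}

theorem mem_nbhd_iff {B : Set V} {u : V} : u ∈ nbhd Γ B ↔ ∃ w ∈ B, Γ.Adj u w := by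
  simp only [nbhd, Set.mem_iUnion, SimpleGraph.mem_neighborSet, exists_prop, Γ.adj_comm]

theorem quotGraph_adj_iff {B C : ↥P} :
    (quotGraph Γ P).Adj B C ↔ B ≠ C ∧ ∃ u ∈ (B : Set V), ∃ w ∈ (C : Set V), Γ.Adj u w := by
  rw [quotGraph, SimpleGraph.fromRel_adj]
  constructor
  · rintro ⟨hne, h | ⟨u, hu, w, hw, h⟩⟩
    · exact ⟨hne, h⟩
    · exact ⟨hne, w, hw, u, hu, h.symm⟩
  · rintro ⟨hne, h⟩
    exact ⟨hne, Or.inl h⟩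

theorem Set.eq_of_ncard_eq_two {α : Type*} {s : Set α} (hs : s.ncard = 2) {a b c : α}
    (ha : a ∈ s) (hb : b ∈ s) (hc : c ∈ s) (hab : a ≠ b) (hcb : c ≠ b) : c = a := by
  obtain ⟨x, y, -, rfl⟩ := Set.ncard_eq_two.1 hs
  simp only [Set.mem_insert_iff, Set.mem_singleton_iff] at ha hb hc
  grind

theorem exists_path2_of_regular {W : Type*} {G : SimpleGraph W} {d : ℕ} (hG : Regular G d)
    (hd : 2 ≤ d) (w : W) : ∃ p : Path2 G, p.1.2.1 = w := by
  have hcard := hG w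
  obtain ⟨D, hD⟩ := Set.nonempty_of_ncard_ne_zero (s := G.neighborSet w) (by omega)
  obtain ⟨C, hC, hne⟩ := Set.exists_ne_of_one_lt_ncard (s := G.neighborSet w) (by omega) D
  exact ⟨⟨(D, w, C), hD.symm, hC, hne.symm⟩, rfl⟩

end Basic

namespace Setoid.IsPartition

variable {V : Type*} {P : Set (Set V)} (hP : Setoid.IsPartition P)

noncomputable def blockOf (v : V) : ↥P :=
  ⟨(hP.2 v).exists.choose, (hP.2 v).exists.choose_spec.1⟩

theorem mem_blockOf (v : V) : v ∈ (hP.blockOf v : Set V) :=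
  (hP.2 v).exists.choose_spec.2

theorem blockOf_eq {v : V} {B : ↥P} (hv : v ∈ (B : Set V)) : hP.blockOf v = B :=
  Subtype.ext ((hP.2 v).unique ⟨(hP.blockOf v).2, hP.mem_blockOf v⟩ ⟨B.2, hv⟩)

end Setoid.IsPartition

section Action

variable {V X : Type*} [Group X] [MulAction X V] {Γ : SimpleGraph V} {P : Set (Set V)}

theorem AdjPres.adj_smul_iff (hpres : AdjPres X Γ) (x : X) {u w : V} :
    Γ.Adj (x • u) (x • w) ↔ Γ.Adj u w :=
  ⟨fun h => by simpa using hpres x⁻¹ _ _ h, hpres x u w⟩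

theorem AdjPres.nbhd_smul (hpres : AdjPres X Γ) (x : X) (B : Set V) :
    nbhd Γ (x • B) = x • nbhd Γ B := by
  ext u
  rw [Set.mem_smul_set_iff_inv_smul_mem, mem_nbhd_iff, mem_nbhd_iff]
  constructor
  · rintro ⟨_, ⟨w, hw, rfl⟩, h⟩
    exact ⟨w, hw, by rwa [← hpres.adj_smul_iff x, smul_inv_smul]⟩
  · rintro ⟨w, hw, h⟩
    exact ⟨x • w, Set.smul_mem_smul_set hw, by rwa [← hpres.adj_smul_iff x⁻¹, inv_smul_smul]⟩

theorem BlockMaps.smul_mem {x : X} {B C : ↥P} (h : BlockMaps X P x B C) {u : V}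
    (hu : u ∈ (B : Set V)) : x • u ∈ (C : Set V) := by
  rw [h]
  exact Set.smul_mem_smul_set hu

theorem BlockMaps.smul_mem_nbhd (hpres : AdjPres X Γ) {x : X} {B C : ↥P}
    (h : BlockMaps X P x B C) {u : V} (hu : u ∈ nbhd Γ B) : x • u ∈ nbhd Γ C := by
  rw [h, hpres.nbhd_smul]
  exact Set.smul_mem_smul_set hu

theorem BlockMaps.ne {x : X} {B C B' C' : ↥P} (h : BlockMaps X P x B C)
    (h' : BlockMaps X P x B' C') (hne : B ≠ B') : C ≠ C' := by
  intro hC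
  apply hne
  apply Subtype.ext
  apply smul_left_cancel x
  rw [← h, ← h', hC]

theorem BlockMaps.exists (hinv : ∀ x : X, ∀ B ∈ P, x • B ∈ P) (x : X) (B : ↥P) :
    ∃ C, BlockMaps X P x B C :=
  ⟨⟨x • (B : Set V), hinv x _ B.2⟩, rfl⟩

theorem BlockMaps.adj (hpres : AdjPres X Γ) {x : X} {B C B' C' : ↥P}
    (hB : BlockMaps X P x B B') (hC : BlockMaps X P x C C') (hadj : (quotGraph Γ P).Adj B C) :
    (quotGraph Γ P).Adj B' C' := by
  obtain ⟨hne, u, hu, w, hw, h⟩ := quotGraph_adj_iff.1 hadj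
  exact quotGraph_adj_iff.2 ⟨hB.ne hC hne, x • u, hB.smul_mem hu, x • w, hC.smul_mem hw,
    hpres x u w h⟩

theorem blockMaps_of_mem (hP : Setoid.IsPartition P) (hinv : ∀ x : X, ∀ B ∈ P, x • B ∈ P)
    {x : X} {B C : ↥P} {u : V} (hu : u ∈ (B : Set V)) (hxu : x • u ∈ (C : Set V)) :
    BlockMaps X P x B C := by
  obtain ⟨C', hC'⟩ := BlockMaps.exists hinv x B
  rwa [← hP.blockOf_eq hxu, hP.blockOf_eq (hC'.smul_mem hu)]

theorem exists_blockMaps_of_vertexTrans (hvtrans : VertexTrans X V) (hP : Setoid.IsPartition P)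
    (hinv : ∀ x : X, ∀ B ∈ P, x • B ∈ P) (B C : ↥P) : ∃ x, BlockMaps X P x B C := by
  obtain ⟨u, hu⟩ := Set.nonempty_iff_ne_empty.2 fun h => hP.1 (h ▸ B.2)
  obtain ⟨w, hw⟩ := Set.nonempty_iff_ne_empty.2 fun h => hP.1 (h ▸ C.2)
  obtain ⟨x, rfl⟩ := hvtrans u w
  exact ⟨x, blockMaps_of_mem hP hinv hu hw⟩

theorem quotGraph_relXSymm (hsym : XSymm X Γ) (hP : XInvariantPartition X P) :
    RelXSymm X (BlockMaps X P) (quotGraph Γ P) := by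
  obtain ⟨hpres, hvtrans, hatrans⟩ := hsym
  refine ⟨fun x B C B' C' hadj hB hC => hB.adj hpres hC hadj,
    exists_blockMaps_of_vertexTrans hvtrans hP.1 hP.2, fun B C B' C' h h' => ?_⟩
  obtain ⟨-, u, hu, w, hw, huw⟩ := quotGraph_adj_iff.1 h
  obtain ⟨-, u', hu', w', hw', huw'⟩ := quotGraph_adj_iff.1 h'
  obtain ⟨x, hx⟩ := hatrans (u, w) (u', w') huw huw'
  obtain ⟨rfl, rfl⟩ := Prod.ext_iff.1 hx
  exact ⟨x, blockMaps_of_mem hP.1 hP.2 hu hu', blockMaps_of_mem hP.1 hP.2 hw hw'⟩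

theorem blockOf_ne_of_adj (hP : Setoid.IsPartition P) (hinv : ∀ x : X, ∀ B ∈ P, x • B ∈ P)
    (hatrans : ArcTrans X Γ) {B C : ↥P} (hBC : (quotGraph Γ P).Adj B C) {u w : V}
    (huw : Γ.Adj u w) : hP.blockOf u ≠ hP.blockOf w := by
  obtain ⟨hne, u₀, hu₀, w₀, hw₀, h₀⟩ := quotGraph_adj_iff.1 hBC
  obtain ⟨x, hx⟩ := hatrans (u, w) (u₀, w₀) huw h₀
  obtain ⟨rfl, rfl⟩ := Prod.ext_iff.1 hx
  have hB := blockMaps_of_mem hP hinv (hP.mem_blockOf u) hu₀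
  have hC := blockMaps_of_mem hP hinv (hP.mem_blockOf w) hw₀
  intro hblk
  exact hne (Subtype.ext (by rw [hB, hC, hblk]))

end Action

section IndexedPartition

variable {V W : Type*} {T : W → Set V}

theorem isPartition_range (hne : ∀ z, (T z).Nonempty) (huniq : ∀ v, ∃! z, v ∈ T z) :
    Setoid.IsPartition (Set.range T) := by
  refine ⟨fun ⟨z, hz⟩ => (hne z).ne_empty hz, fun v => ?_⟩
  obtain ⟨z, hz, hunique⟩ := huniq v
  refine ⟨T z, ⟨⟨z, rfl⟩, hz⟩, ?_⟩
  rintro _ ⟨⟨z', rfl⟩, hz'⟩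
  rw [hunique z' hz']

theorem nonempty_quotGraph_range_iso {Γ : SimpleGraph V} {H : SimpleGraph W}
    (hne : ∀ z, (T z).Nonempty) (huniq : ∀ v, ∃! z, v ∈ T z)
    (hadj : ∀ z z', H.Adj z z' ↔ ∃ a ∈ T z, ∃ c ∈ T z', Γ.Adj a c) :
    Nonempty (quotGraph Γ (Set.range T) ≃g H) := by
  have hT : Function.Injective T := fun z z' h => by
    obtain ⟨v, hv⟩ := hne z
    exact (huniq v).unique (h ▸ hv) hv |>.symm
  refine ⟨(⟨Equiv.ofInjective T hT, fun {z z'} => ?_⟩ : H ≃g quotGraph Γ (Set.range T)).symm⟩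
  rw [quotGraph_adj_iff, hadj]
  exact ⟨fun h => h.2, fun h => ⟨((Equiv.ofInjective T hT).injective.ne
    ((hadj z z').2 h).ne), h⟩⟩

theorem nonempty_iso_of_ncard_eq_one {Γ : SimpleGraph V} {H : SimpleGraph W}
    (hone : ∀ z, (T z).ncard = 1) (huniq : ∀ v, ∃! z, v ∈ T z)
    (hadj : ∀ z z', H.Adj z z' ↔ ∃ a ∈ T z, ∃ c ∈ T z', Γ.Adj a c) :
    Nonempty (Γ ≃g H) := by
  choose f hf using fun z => Set.ncard_eq_one.1 (hone z)
  have hbij : Function.Bijective f := by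
    refine ⟨fun z z' h => (huniq (f z)).unique ?_ ?_, fun v => ?_⟩
    · simp [hf]
    · simp [hf, h]
    · obtain ⟨z, hz, -⟩ := huniq v
      rw [hf] at hz
      exact ⟨z, hz.symm⟩
  exact ⟨(⟨Equiv.ofBijective f hbij, fun {z z'} => by simp [hadj, hf]⟩ : H ≃g Γ).symm⟩

end IndexedPartition

section Traces

variable {V : Type*} {Γ : SimpleGraph V} {P : Set (Set V)}

def Path2.trace (p : Path2 (quotGraph Γ P)) : Set V :=
  nbhd Γ ↑p.1.1 ∩ ↑p.1.2.1 ∩ nbhd Γ ↑p.1.2.2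

theorem Path2.trace_p2rev (p : Path2 (quotGraph Γ P)) : (p2rev _ p).trace = p.trace := by
  ext v
  simp only [Path2.trace, p2rev, Set.mem_inter_iff]
  tauto

def P2.trace (z : P2 (quotGraph Γ P)) : Set V :=
  Quot.lift Path2.trace (by rintro p _ rfl; exact (Path2.trace_p2rev p).symm) z

theorem P2.exists_trace_subset (z : P2 (quotGraph Γ P)) : ∃ B ∈ P, z.trace ⊆ B := by
  induction z using Quot.ind with
  | mk p => exact ⟨p.1.2.1, p.1.2.1.2, fun _ hv => hv.1.2⟩

theorem quotRefine_eq_range_trace : quotRefine Γ P = Set.range (P2.trace (Γ := Γ) (P := P)) := by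
  ext S
  constructor
  · rintro ⟨D, B, C, hDB, hBC, hDC, rfl⟩
    exact ⟨P2.mk _ ⟨(D, B, C), hDB, hBC, hDC⟩, rfl⟩
  · rintro ⟨z, rfl⟩
    induction z using Quot.ind with
    | mk p => exact ⟨_, _, _, p.2.1, p.2.2.1, p.2.2.2, rfl⟩

variable {X : Type*} [Group X] [MulAction X V]

theorem Path2.exists_blockMaps (hpres : AdjPres X Γ) (hinv : ∀ x : X, ∀ B ∈ P, x • B ∈ P)
    (x : X) (p : Path2 (quotGraph Γ P)) :
    ∃ q : Path2 (quotGraph Γ P), BlockMaps X P x p.1.1 q.1.1 ∧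
      BlockMaps X P x p.1.2.1 q.1.2.1 ∧ BlockMaps X P x p.1.2.2 q.1.2.2 := by
  obtain ⟨D, hD⟩ := BlockMaps.exists hinv x p.1.1
  obtain ⟨B, hB⟩ := BlockMaps.exists hinv x p.1.2.1
  obtain ⟨C, hC⟩ := BlockMaps.exists hinv x p.1.2.2
  exact ⟨⟨(D, B, C), hD.adj hpres hB p.2.1, hB.adj hpres hC p.2.2.1, hD.ne hC p.2.2.2⟩,
    hD, hB, hC⟩

theorem Path2.trace_eq_smul (hpres : AdjPres X Γ) {p q : Path2 (quotGraph Γ P)} {x : X}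
    (h₁ : BlockMaps X P x p.1.1 q.1.1) (h₂ : BlockMaps X P x p.1.2.1 q.1.2.1)
    (h₃ : BlockMaps X P x p.1.2.2 q.1.2.2) : q.trace = x • p.trace := by
  rw [BlockMaps] at h₁ h₂ h₃
  rw [Path2.trace, Path2.trace, h₁, h₂, h₃, Set.smul_set_inter, Set.smul_set_inter,
    hpres.nbhd_smul, hpres.nbhd_smul]

theorem P2.smul_trace_mem_range (hpres : AdjPres X Γ) (hinv : ∀ x : X, ∀ B ∈ P, x • B ∈ P)
    (x : X) (z : P2 (quotGraph Γ P)) : x • z.trace ∈ Set.range (P2.trace (Γ := Γ) (P := P)) := by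
  induction z using Quot.ind with
  | mk p =>
    obtain ⟨q, h₁, h₂, h₃⟩ := p.exists_blockMaps hpres hinv x
    exact ⟨P2.mk _ q, Path2.trace_eq_smul hpres h₁ h₂ h₃⟩

theorem Path2.trace_nonempty (hpres : AdjPres X Γ) (hvtrans : VertexTrans X V)
    (hP : Setoid.IsPartition P) (hinv : ∀ x : X, ∀ B ∈ P, x • B ∈ P) (B₀ : ↥P)
    (hsup : ∀ D C : ↥P, (quotGraph Γ P).Adj D B₀ → (quotGraph Γ P).Adj B₀ C → D ≠ C →
      (nbhd Γ ↑D ∩ ↑B₀ ∩ nbhd Γ ↑C).Nonempty)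
    (p : Path2 (quotGraph Γ P)) : p.trace.Nonempty := by
  obtain ⟨x, hx⟩ := exists_blockMaps_of_vertexTrans hvtrans hP hinv p.1.2.1 B₀
  obtain ⟨q, h₁, h₂, h₃⟩ := p.exists_blockMaps hpres hinv x
  obtain rfl : q.1.2.1 = B₀ := Subtype.ext (h₂.trans hx.symm)
  have hq : q.trace.Nonempty := hsup q.1.1 q.1.2.2 q.2.1 q.2.2.1 q.2.2.2
  rwa [Path2.trace_eq_smul hpres h₁ h₂ h₃, Set.smul_set_nonempty] at hq

theorem Path2.trace_ncard_eq (hpres : AdjPres X Γ)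
    (h2arc : RelArc2Trans X (BlockMaps X P) (quotGraph Γ P)) (p q : Path2 (quotGraph Γ P)) :
    q.trace.ncard = p.trace.ncard := by
  obtain ⟨x, h₁, h₂, h₃⟩ :=
    h2arc _ _ _ _ _ _ p.2.1 p.2.2.1 p.2.2.2 q.2.1 q.2.2.1 q.2.2.2
  rw [Path2.trace_eq_smul hpres h₁ h₂ h₃, Set.ncard_smul_set]

theorem Path2.trace_notMem (hP : Setoid.IsPartition P)
    (hnmc : ∀ B C : ↥P, (quotGraph Γ P).Adj B C → nbhd Γ ↑C ∩ ↑B ≠ (↑B : Set V))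
    (p : Path2 (quotGraph Γ P)) (hp : p.trace.Nonempty) : p.trace ∉ P := by
  intro hmem
  obtain ⟨v, hv⟩ := hp
  have htrace : p.trace = p.1.2.1 :=
    congrArg Subtype.val ((hP.blockOf_eq (B := ⟨_, hmem⟩) hv).symm.trans (hP.blockOf_eq hv.1.2))
  refine hnmc _ _ p.2.2.1 (Set.Subset.antisymm Set.inter_subset_right fun u hu => ⟨?_, hu⟩)
  rw [← htrace] at hu
  exact hu.2

theorem xInvariantPartition_range_trace (hpres : AdjPres X Γ)
    (hinv : ∀ x : X, ∀ B ∈ P, x • B ∈ P) (hne : ∀ z : P2 (quotGraph Γ P), z.trace.Nonempty)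
    (huniq : ∀ v, ∃! z : P2 (quotGraph Γ P), v ∈ z.trace) :
    XInvariantPartition X (Set.range (P2.trace (Γ := Γ) (P := P))) := by
  refine ⟨isPartition_range hne huniq, ?_⟩
  rintro x _ ⟨z, rfl⟩
  exact P2.smul_trace_mem_range hpres hinv x z

theorem nontrivialBlocks_range_trace [Fintype V] (hPnt : NontrivialBlocks P) {lam : ℕ}
    (hlam : 2 ≤ lam) (hncard : ∀ z : P2 (quotGraph Γ P), z.trace.ncard = lam) :
    NontrivialBlocks (Set.range (P2.trace (Γ := Γ) (P := P))) := by
  rintro _ ⟨z, rfl⟩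
  obtain ⟨B, hB, hsub⟩ := z.exists_trace_subset
  have := Set.ncard_le_ncard hsub
  have := hPnt B hB
  have := hncard z
  omega

end Traces

section TwoSides

variable {V X : Type*} [Group X] [MulAction X V] {Γ : SimpleGraph V} {P : Set (Set V)}

theorem side_eq_of_ne (hr2 : ∀ u : V, ({C : Set V | C ∈ P ∧ u ∈ nbhd Γ C}).ncard = 2) {v : V}
    {E F E' : ↥P} (hE : v ∈ nbhd Γ E) (hF : v ∈ nbhd Γ F) (hE' : v ∈ nbhd Γ E')
    (hEF : E ≠ F) (hE'F : E' ≠ F) : E' = E :=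
  Subtype.ext (Set.eq_of_ncard_eq_two (hr2 v) ⟨E.2, hE⟩ ⟨F.2, hF⟩ ⟨E'.2, hE'⟩
    (Subtype.coe_injective.ne hEF) (Subtype.coe_injective.ne hE'F))

theorem exists_side_ne (hr2 : ∀ u : V, ({C : Set V | C ∈ P ∧ u ∈ nbhd Γ C}).ncard = 2) (v : V)
    (E : ↥P) : ∃ F : ↥P, v ∈ nbhd Γ F ∧ F ≠ E := by
  obtain ⟨F, ⟨hF, hvF⟩, hne⟩ :=
    Set.exists_ne_of_one_lt_ncard (by rw [hr2 v]; norm_num) (E : Set V)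
  exact ⟨⟨F, hF⟩, hvF, fun h => hne (congrArg Subtype.val h)⟩

theorem BlockMaps.of_side (hpres : AdjPres X Γ) (hinv : ∀ x : X, ∀ B ∈ P, x • B ∈ P)
    (hr2 : ∀ u : V, ({C : Set V | C ∈ P ∧ u ∈ nbhd Γ C}).ncard = 2) {x : X}
    {E F E' F' : ↥P} (hF : BlockMaps X P x F F') {u : V} (huE : u ∈ nbhd Γ E) (hEF : E ≠ F) (hE' : x • u ∈ nbhd Γ E') (hF' : x • u ∈ nbhd Γ F')
    (hE'F' : E' ≠ F') : BlockMaps X P x E E' := by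
  obtain ⟨E'', hE''⟩ := BlockMaps.exists hinv x E
  obtain rfl := side_eq_of_ne hr2 (hE''.smul_mem_nbhd hpres huE) hF' hE'
    (hE''.ne hF hEF) hE'F'
  exact hE''

theorem quotGraph_adj_blockOf (hP : Setoid.IsPartition P)
    (hintra : ∀ {u w : V}, Γ.Adj u w → hP.blockOf u ≠ hP.blockOf w) {v : V} {E : ↥P}
    (hv : v ∈ nbhd Γ E) : (quotGraph Γ P).Adj (hP.blockOf v) E := by
  obtain ⟨w, hw, h⟩ := mem_nbhd_iff.1 hv
  exact quotGraph_adj_iff.2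
    ⟨hP.blockOf_eq hw ▸ hintra h, v, hP.mem_blockOf v, w, hw, h⟩

theorem Path2.eq_or_eq_p2rev_of_mem_trace (hP : Setoid.IsPartition P)
    (hr2 : ∀ u : V, ({C : Set V | C ∈ P ∧ u ∈ nbhd Γ C}).ncard = 2) {v : V}
    {p q : Path2 (quotGraph Γ P)} (hp : v ∈ p.trace) (hq : v ∈ q.trace) :
    q = p ∨ q = p2rev _ p := by
  obtain ⟨⟨hp₁, hp₂⟩, hp₃⟩ := hp
  obtain ⟨⟨hq₁, hq₂⟩, hq₃⟩ := hq
  have hmid : q.1.2.1 = p.1.2.1 := (hP.blockOf_eq hq₂).symm.trans (hP.blockOf_eq hp₂)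
  by_cases h : q.1.1 = p.1.2.2
  · have h₃ : q.1.2.2 = p.1.1 :=
      side_eq_of_ne hr2 hp₁ hp₃ hq₃ p.2.2.2 fun h' => q.2.2.2 (h.trans h'.symm)
    exact Or.inr (Subtype.ext (Prod.ext h (Prod.ext hmid h₃)))
  · have h₁ : q.1.1 = p.1.1 := side_eq_of_ne hr2 hp₁ hp₃ hq₁ p.2.2.2 h
    have h₃ : q.1.2.2 = p.1.2.2 :=
      side_eq_of_ne hr2 hp₃ hp₁ hq₃ p.2.2.2.symm fun h' => q.2.2.2 (h₁.trans h'.symm)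
    exact Or.inl (Subtype.ext (Prod.ext h₁ (Prod.ext hmid h₃)))

theorem P2.eq_of_mem_trace (hP : Setoid.IsPartition P)
    (hr2 : ∀ u : V, ({C : Set V | C ∈ P ∧ u ∈ nbhd Γ C}).ncard = 2) {v : V}
    {z z' : P2 (quotGraph Γ P)} (hz : v ∈ z.trace) (hz' : v ∈ z'.trace) : z' = z := by
  induction z using Quot.ind with
  | mk p =>
    induction z' using Quot.ind with
    | mk q =>
      rcases Path2.eq_or_eq_p2rev_of_mem_trace hP hr2 hz hz' with rfl | rfl
      · rfl
      · symm
        exact Quot.sound rfl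

theorem P2.existsUnique_mem_trace (hP : Setoid.IsPartition P)
    (hr2 : ∀ u : V, ({C : Set V | C ∈ P ∧ u ∈ nbhd Γ C}).ncard = 2)
    (hintra : ∀ {u w : V}, Γ.Adj u w → hP.blockOf u ≠ hP.blockOf w) (v : V) :
    ∃! z : P2 (quotGraph Γ P), v ∈ z.trace := by
  obtain ⟨E, hE, -⟩ := exists_side_ne hr2 v (hP.blockOf v)
  obtain ⟨F, hF, hFE⟩ := exists_side_ne hr2 v E
  refine ⟨P2.mk _ ⟨(E, hP.blockOf v, F), (quotGraph_adj_blockOf hP hintra hE).symm,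
    quotGraph_adj_blockOf hP hintra hF, hFE.symm⟩, ⟨⟨hE, hP.mem_blockOf v⟩, hF⟩,
    fun z hz => P2.eq_of_mem_trace hP hr2 ⟨⟨hE, hP.mem_blockOf v⟩, hF⟩ hz⟩

theorem quotGraph_relArc2Trans (hpres : AdjPres X Γ) (hatrans : ArcTrans X Γ)
    (hP : Setoid.IsPartition P) (hinv : ∀ x : X, ∀ B ∈ P, x • B ∈ P)
    (hr2 : ∀ u : V, ({C : Set V | C ∈ P ∧ u ∈ nbhd Γ C}).ncard = 2)
    (hne : ∀ p : Path2 (quotGraph Γ P), p.trace.Nonempty) :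
    RelArc2Trans X (BlockMaps X P) (quotGraph Γ P) := by
  intro D B C D' B' C' hDB hBC hDC hD'B' hB'C' hD'C'
  obtain ⟨u, ⟨huD, huB⟩, huC⟩ := hne ⟨(D, B, C), hDB, hBC, hDC⟩
  obtain ⟨u', ⟨hu'D, hu'B⟩, hu'C⟩ := hne ⟨(D', B', C'), hD'B', hB'C', hD'C'⟩
  obtain ⟨c, hc, huc⟩ := mem_nbhd_iff.1 huC
  obtain ⟨c', hc', hu'c'⟩ := mem_nbhd_iff.1 hu'C
  obtain ⟨x, hx⟩ := hatrans (u, c) (u', c') huc hu'c'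
  obtain ⟨rfl, rfl⟩ := Prod.ext_iff.1 hx
  have hC := blockMaps_of_mem hP hinv hc hc'
  exact ⟨x, hC.of_side hpres hinv hr2 huD hDC hu'D hu'C hD'C',
    blockMaps_of_mem hP hinv huB hu'B, hC⟩

end TwoSides

section Delta

variable {V X : Type*} [Group X] [MulAction X V] {Γ : SimpleGraph V} {P : Set (Set V)}

theorem isArc3_of_mem_quotDelta (hP : Setoid.IsPartition P)
    (hintra : ∀ {u w : V}, Γ.Adj u w → hP.blockOf u ≠ hP.blockOf w)
    {t : ↥P × ↥P × ↥P × ↥P} (ht : t ∈ quotDelta Γ P) : IsArc3 (quotGraph Γ P) t := by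
  obtain ⟨C, B, B', D⟩ := t
  obtain ⟨u, w, huw, hu, hw, huC, hwD, hCB', hDB⟩ := ht
  obtain rfl := hP.blockOf_eq hu
  obtain rfl := hP.blockOf_eq hw
  exact ⟨(quotGraph_adj_blockOf hP hintra huC).symm,
    quotGraph_adj_iff.2 ⟨hintra huw, u, hu, w, hw, huw⟩,
    quotGraph_adj_blockOf hP hintra hwD, hCB', hDB.symm⟩

theorem rev3_mem_quotDelta {t : ↥P × ↥P × ↥P × ↥P} (ht : t ∈ quotDelta Γ P) :
    rev3 t ∈ quotDelta Γ P := by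
  obtain ⟨u, w, huw, hu, hw, huC, hwD, hCB', hDB⟩ := ht
  exact ⟨w, u, huw.symm, hw, hu, hwD, huC, hDB, hCB'⟩

theorem quotDelta_nonempty (hP : Setoid.IsPartition P)
    (hr2 : ∀ u : V, ({C : Set V | C ∈ P ∧ u ∈ nbhd Γ C}).ncard = 2) {u w : V}
    (huw : Γ.Adj u w) : (quotDelta Γ P).Nonempty := by
  obtain ⟨E, hE, hEw⟩ := exists_side_ne hr2 u (hP.blockOf w)
  obtain ⟨F, hF, hFu⟩ := exists_side_ne hr2 w (hP.blockOf u)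
  exact ⟨(E, hP.blockOf u, hP.blockOf w, F),
    u, w, huw, hP.mem_blockOf u, hP.mem_blockOf w, hE, hF, hEw, hFu⟩

theorem exists_blockMaps_of_mem_quotDelta (hpres : AdjPres X Γ) (hatrans : ArcTrans X Γ)
    (hP : Setoid.IsPartition P) (hinv : ∀ x : X, ∀ B ∈ P, x • B ∈ P)
    (hr2 : ∀ u : V, ({C : Set V | C ∈ P ∧ u ∈ nbhd Γ C}).ncard = 2)
    {s t : ↥P × ↥P × ↥P × ↥P} (hs : s ∈ quotDelta Γ P) (ht : t ∈ quotDelta Γ P) :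
    ∃ x : X, BlockMaps X P x s.1 t.1 ∧ BlockMaps X P x s.2.1 t.2.1 ∧
      BlockMaps X P x s.2.2.1 t.2.2.1 ∧ BlockMaps X P x s.2.2.2 t.2.2.2 := by
  obtain ⟨u, w, huw, hu, hw, huC, hwD, hCB', hDB⟩ := hs
  obtain ⟨u', w', hu'w', hu', hw', hu'C, hw'D, hC'B', hD'B⟩ := ht
  obtain ⟨x, hx⟩ := hatrans (u, w) (u', w') huw hu'w'
  obtain ⟨rfl, rfl⟩ := Prod.ext_iff.1 hx
  have hB := blockMaps_of_mem hP hinv hu hu'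
  have hB' := blockMaps_of_mem hP hinv hw hw'
  exact ⟨x, hB'.of_side hpres hinv hr2 huC hCB' hu'C (mem_nbhd_iff.2 ⟨_, hw', hu'w'⟩) hC'B',
    hB, hB', hB.of_side hpres hinv hr2 hwD hDB hw'D (mem_nbhd_iff.2 ⟨_, hu', hu'w'.symm⟩) hD'B⟩

theorem mem_quotDelta_of_blockMaps (hpres : AdjPres X Γ) {s t : ↥P × ↥P × ↥P × ↥P}
    (hs : s ∈ quotDelta Γ P) {x : X} (h₁ : BlockMaps X P x s.1 t.1)
    (h₂ : BlockMaps X P x s.2.1 t.2.1) (h₃ : BlockMaps X P x s.2.2.1 t.2.2.1)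
    (h₄ : BlockMaps X P x s.2.2.2 t.2.2.2) : t ∈ quotDelta Γ P := by
  obtain ⟨u, w, huw, hu, hw, huC, hwD, hCB', hDB⟩ := hs
  exact ⟨x • u, x • w, hpres x u w huw, h₂.smul_mem hu, h₃.smul_mem hw,
    h₁.smul_mem_nbhd hpres huC, h₄.smul_mem_nbhd hpres hwD, h₁.ne h₃ hCB', h₄.ne h₂ hDB⟩

theorem quotDelta_selfPairedOrbit3 (hsym : XSymm X Γ) (hP : XInvariantPartition X P)
    (hr2 : ∀ u : V, ({C : Set V | C ∈ P ∧ u ∈ nbhd Γ C}).ncard = 2) {B C : ↥P}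
    (hBC : (quotGraph Γ P).Adj B C) : QSelfPairedOrbit3 X Γ P (quotDelta Γ P) := by
  obtain ⟨hpres, -, hatrans⟩ := hsym
  have hintra : ∀ {u w : V}, Γ.Adj u w → hP.1.blockOf u ≠ hP.1.blockOf w :=
    blockOf_ne_of_adj hP.1 hP.2 hatrans hBC
  obtain ⟨-, u, -, w, -, huw⟩ := quotGraph_adj_iff.1 hBC
  obtain ⟨t₀, ht₀⟩ := quotDelta_nonempty hP.1 hr2 huw
  refine ⟨fun t ht => isArc3_of_mem_quotDelta hP.1 hintra ht, ⟨t₀, ht₀, fun t => ⟨fun ht =>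
    exists_blockMaps_of_mem_quotDelta hpres hatrans hP.1 hP.2 hr2 ht₀ ht, ?_⟩⟩,
    fun t ht => rev3_mem_quotDelta ht⟩
  rintro ⟨x, h₁, h₂, h₃, h₄⟩
  exact mem_quotDelta_of_blockMaps hpres ht₀ h₁ h₂ h₃ h₄

theorem exists_adj_of_mem_quotDelta {p q : Path2 (quotGraph Γ P)} (h₁ : p.1.2.1 = q.1.1)
    (h₂ : p.1.2.2 = q.1.2.1) (hΔ : (p.1.1, p.1.2.1, p.1.2.2, q.1.2.2) ∈ quotDelta Γ P) :
    ∃ a ∈ p.trace, ∃ c ∈ q.trace, Γ.Adj a c := by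
  obtain ⟨u, w, huw, hu, hw, huC, hwD, -, -⟩ := hΔ
  refine ⟨u, ⟨⟨huC, hu⟩, mem_nbhd_iff.2 ⟨w, hw, huw⟩⟩, w, ⟨⟨?_, h₂ ▸ hw⟩, hwD⟩, huw⟩
  rw [← h₁]
  exact mem_nbhd_iff.2 ⟨u, hu, huw.symm⟩

theorem gimel_adj_iff (hP : Setoid.IsPartition P)
    (hr2 : ∀ u : V, ({C : Set V | C ∈ P ∧ u ∈ nbhd Γ C}).ncard = 2)
    (hintra : ∀ {u w : V}, Γ.Adj u w → hP.blockOf u ≠ hP.blockOf w)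
    (z z' : P2 (quotGraph Γ P)) :
    (gimel (quotGraph Γ P) (quotDelta Γ P)).Adj z z' ↔
      ∃ a ∈ z.trace, ∃ c ∈ z'.trace, Γ.Adj a c := by
  rw [gimel, SimpleGraph.fromRel_adj]
  constructor
  · rintro ⟨-, ⟨p, q, rfl, rfl, h₁, h₂, hΔ⟩ | ⟨p, q, rfl, rfl, h₁, h₂, hΔ⟩⟩
    · exact exists_adj_of_mem_quotDelta h₁ h₂ hΔ
    · obtain ⟨a, ha, c, hc, hac⟩ := exists_adj_of_mem_quotDelta h₁ h₂ hΔ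
      exact ⟨c, hc, a, ha, hac.symm⟩
  · rintro ⟨a, ha, c, hc, hac⟩
    obtain ⟨E, hE, hEc⟩ := exists_side_ne hr2 a (hP.blockOf c)
    obtain ⟨F, hF, hFa⟩ := exists_side_ne hr2 c (hP.blockOf a)
    have hab := quotGraph_adj_iff.2
      ⟨hintra hac, a, hP.mem_blockOf a, c, hP.mem_blockOf c, hac⟩
    let p : Path2 (quotGraph Γ P) :=
      ⟨(E, hP.blockOf a, hP.blockOf c), (quotGraph_adj_blockOf hP hintra hE).symm, hab, hEc⟩
    let q : Path2 (quotGraph Γ P) :=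
      ⟨(hP.blockOf a, hP.blockOf c, F), hab, (quotGraph_adj_blockOf hP hintra hF), hFa.symm⟩
    have hp : a ∈ p.trace :=
      ⟨⟨hE, hP.mem_blockOf a⟩, mem_nbhd_iff.2 ⟨c, hP.mem_blockOf c, hac⟩⟩
    have hq : c ∈ q.trace :=
      ⟨⟨mem_nbhd_iff.2 ⟨a, hP.mem_blockOf a, hac.symm⟩, hP.mem_blockOf c⟩, hF⟩
    obtain rfl := P2.eq_of_mem_trace hP hr2 (z := P2.mk _ p) hp ha
    obtain rfl := P2.eq_of_mem_trace hP hr2 (z := P2.mk _ q) hq hc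
    refine ⟨fun h => hintra hac ?_, Or.inl ⟨p, q, rfl, rfl, rfl, rfl,
      ⟨a, c, hac, hP.mem_blockOf a, hP.mem_blockOf c, hE, hF, hEc, hFa⟩⟩⟩
    have hc' : c ∈ (P2.mk _ p).trace := by rwa [h]
    exact (hP.blockOf_eq hc'.1.2).symm

end Delta

theorem quotient_two_arc_transitive_of_r_two {V X : Type*} [Fintype V] [Group X]
    [MulAction X V] (Γ : SimpleGraph V) (hsym : XSymm X Γ)
    (P : Set (Set V)) (hP : XInvariantPartition X P) (hPnt : NontrivialBlocks P)
    (b : ℕ) (hb : 3 ≤ b) (hqreg : Regular (quotGraph Γ P) b)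
    (hnmc : ∀ B C : ↥P, (quotGraph Γ P).Adj B C → nbhd Γ ↑C ∩ ↑B ≠ (↑B : Set V))
    (hr2 : ∀ u : V, ({C : Set V | C ∈ P ∧ u ∈ nbhd Γ C}).ncard = 2)
    (B₀ : ↥P)
    (hsup : ∀ D C : ↥P, (quotGraph Γ P).Adj D B₀ → (quotGraph Γ P).Adj B₀ C → D ≠ C →
      (nbhd Γ ↑D ∩ ↑B₀ ∩ nbhd Γ ↑C).Nonempty) :
    RelXSymm X (BlockMaps X P) (quotGraph Γ P) ∧
    RelArc2Trans X (BlockMaps X P) (quotGraph Γ P) ∧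
    QSelfPairedOrbit3 X Γ P (quotDelta Γ P) ∧
    ∃ lam : ℕ,
      (∀ D B C : ↥P, (quotGraph Γ P).Adj D B → (quotGraph Γ P).Adj B C → D ≠ C →
        (nbhd Γ ↑D ∩ ↑B ∩ nbhd Γ ↑C).ncard = lam) ∧
      ((lam = 1 ∧ Nonempty (Γ ≃g gimel (quotGraph Γ P) (quotDelta Γ P))) ∨
        (2 ≤ lam ∧ XInvariantPartition X (quotRefine Γ P) ∧
          NontrivialBlocks (quotRefine Γ P) ∧
          (∀ S ∈ quotRefine Γ P, ∃ B ∈ P, S ⊆ B) ∧ quotRefine Γ P ≠ P ∧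
          Nonempty (quotGraph Γ (quotRefine Γ P) ≃g
            gimel (quotGraph Γ P) (quotDelta Γ P)))) := by
  have ⟨hpres, hvtrans, hatrans⟩ := hsym
  have ⟨hpart, hinv⟩ := hP
  obtain ⟨p₀, -⟩ := exists_path2_of_regular hqreg (by omega) B₀
  have hintra : ∀ {u w : V}, Γ.Adj u w → hpart.blockOf u ≠ hpart.blockOf w :=
    blockOf_ne_of_adj hpart hinv hatrans p₀.2.1
  have hpath := Path2.trace_nonempty hpres hvtrans hpart hinv B₀ hsup
  have htrace : ∀ z : P2 (quotGraph Γ P), z.trace.Nonempty := Quot.ind hpath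
  have h2arc := quotGraph_relArc2Trans hpres hatrans hpart hinv hr2 hpath
  have hncard : ∀ z : P2 (quotGraph Γ P), z.trace.ncard = p₀.trace.ncard :=
    Quot.ind fun p => Path2.trace_ncard_eq hpres h2arc p₀ p
  have huniq := P2.existsUnique_mem_trace hpart hr2 hintra
  have hadj := gimel_adj_iff hpart hr2 hintra
  refine ⟨quotGraph_relXSymm hsym hP, h2arc, quotDelta_selfPairedOrbit3 hsym hP hr2 p₀.2.1,
    p₀.trace.ncard, fun D B C hDB hBC hDC => hncard (P2.mk _ ⟨(D, B, C), hDB, hBC, hDC⟩), ?_⟩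
  have hpos : 0 < p₀.trace.ncard := (Set.ncard_pos (Set.toFinite _)).2 (hpath p₀)
  rcases (by omega : p₀.trace.ncard = 1 ∨ 2 ≤ p₀.trace.ncard) with hone | htwo
  · exact Or.inl ⟨hone, nonempty_iso_of_ncard_eq_one (fun z => (hncard z).trans hone) huniq hadj⟩
  rw [quotRefine_eq_range_trace]
  refine Or.inr ⟨htwo, xInvariantPartition_range_trace hpres hinv htrace huniq,
    nontrivialBlocks_range_trace hPnt htwo hncard, ?_,
    fun hQ => p₀.trace_notMem hpart hnmc (hpath p₀) (hQ.subset ⟨P2.mk _ p₀, rfl⟩),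
    nonempty_quotGraph_range_iso htrace huniq hadj⟩
  rintro _ ⟨z, rfl⟩
  exact z.exists_trace_subset
end
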